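/- Let A be a continuous matrix-valued function on an interval I containing t₀, and let Φ_A(t; t₀) denote the sum of the Peano–Baker series. Then its determinant satisfies Liouville's formula: det(Φ_A(t; t₀)) = exp(∫_{t₀}^t tr(A(τ)) dτ) for all t ∈ I. In particular det(Φ_A(t; t₀)) ≠ 0, so Φ_A(t; t₀) is invertible for every t ∈ I. -/

import Mathlib

/-!
Each iterate satisfies `‖I_n(t)‖ ≤ (d C |t - t₀|)^n / n!`, where `C` bounds the entries of `A`
(the factor `d` because the entrywise sup norm is not submultiplicative). The series therefore
converges and may be differentiated term by term, giving `Φ' = A Φ` with `Φ(t₀) = 1`. Jacobi's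
formula turns this into the scalar equation `(det Φ)' = tr A · det Φ`, whose solution with initial
value `1` is `exp ∫ tr A`. Since `A` is only continuous on `I`, it is first replaced by a bounded
continuous extension of its restriction to `[t₀, t]`; this changes no iterate on that interval.
-/

attribute [local instance] Matrix.normedAddCommGroup Matrix.normedSpace

/-- The iterated Peano–Baker integrals with base point `t₀`: `pbIter A t₀ 0 = 1` (identity
matrix) and `pbIter A t₀ (n+1) t = ∫_{t₀}^t A τ * pbIter A t₀ n τ dτ`. -/
noncomputable def pbIter {d : ℕ} (A : ℝ → Matrix (Fin d) (Fin d) ℝ) (t₀ : ℝ) :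
    ℕ → ℝ → Matrix (Fin d) (Fin d) ℝ
  | 0 => fun _ => 1
  | n + 1 => fun t => ∫ τ in t₀..t, A τ * pbIter A t₀ n τ

open MeasureTheory Set
open scoped Interval

namespace Matrix

variable {l m n α : Type*} [Fintype l] [Fintype m] [Fintype n]

theorem norm_mul_le_card_mul [NormedRing α] (M : Matrix l m α) (N : Matrix m n α) :
    ‖M * N‖ ≤ Fintype.card m * ‖M‖ * ‖N‖ := by
  rw [norm_le_iff (by positivity)]
  intro i j
  calc ‖(M * N) i j‖ = ‖∑ k, M i k * N k j‖ := rfl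
    _ ≤ ∑ k, ‖M i k * N k j‖ := norm_sum_le _ _
    _ ≤ ∑ _k : m, ‖M‖ * ‖N‖ := Finset.sum_le_sum fun k _ =>
        (norm_mul_le _ _).trans (mul_le_mul M.norm_entry_le_entrywise_sup_norm
          N.norm_entry_le_entrywise_sup_norm (norm_nonneg _) (norm_nonneg _))
    _ = Fintype.card m * ‖M‖ * ‖N‖ := by simp [mul_assoc]

theorem norm_one_le_one [DecidableEq n] [NormedRing α] [NormOneClass α] :
    ‖(1 : Matrix n n α)‖ ≤ 1 := by
  rw [norm_le_iff zero_le_one]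
  intro i j
  by_cases h : i = j <;> simp [one_apply, h]

variable [DecidableEq n]

theorem sum_det_updateRow_mul [CommRing α] (N M : Matrix n n α) :
    ∑ i, (M.updateRow i ((N * M) i)).det = N.trace * M.det := by
  have hrow : ∀ i, (N * M) i = ∑ k, N i k • M k := fun i => by
    ext j
    simp [mul_apply, Finset.sum_apply]
  simp_rw [hrow, det_updateRow_sum, smul_eq_mul, ← Finset.sum_mul]
  rfl

variable {𝕜 : Type*} [NontriviallyNormedField 𝕜]

variable (n 𝕜) in
noncomputable def detContinuousMultilinear : ContinuousMultilinearMap 𝕜 (fun _ : n => n → 𝕜) 𝕜 where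
  toMultilinearMap := detRowAlternating.toMultilinearMap
  cont := Continuous.matrix_det continuous_id

theorem hasDerivAt_det {Φ : 𝕜 → Matrix n n 𝕜} {Φ' : Matrix n n 𝕜} {t : 𝕜}
    (h : HasDerivAt Φ Φ' t) :
    HasDerivAt (fun s => (Φ s).det) (∑ i, ((Φ t).updateRow i (Φ' i)).det) t :=
  (((detContinuousMultilinear n 𝕜).hasFDerivAt (Φ t)).comp_hasDerivAt t h).congr_deriv
    ((detContinuousMultilinear n 𝕜).linearDeriv_apply (Φ t) Φ')

theorem hasDerivAt_det_of_hasDerivAt_mul {Φ : 𝕜 → Matrix n n 𝕜} {N : Matrix n n 𝕜} {t : 𝕜}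
    (h : HasDerivAt Φ (N * Φ t) t) : HasDerivAt (fun s => (Φ s).det) (N.trace * (Φ t).det) t :=
  sum_det_updateRow_mul N (Φ t) ▸ hasDerivAt_det h

end Matrix

theorem eq_mul_exp_integral_of_hasDerivAt {f a : ℝ → ℝ} (ha : Continuous a)
    (hf : ∀ t, HasDerivAt f (a t * f t) t) (t₀ t : ℝ) :
    f t = f t₀ * Real.exp (∫ τ in t₀..t, a τ) := by
  set ρ : ℝ → ℝ := fun s => ∫ τ in t₀..s, a τ
  have hρ : ∀ s, HasDerivAt ρ (a s) s := fun s => (ha.integral_hasStrictDerivAt t₀ s).hasDerivAt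
  have hconst : ∀ s, HasDerivAt (fun s => f s * Real.exp (-ρ s)) 0 s := fun s =>
    ((hf s).mul (hρ s).neg.exp).congr_deriv (by ring)
  have heq := is_const_of_deriv_eq_zero (fun s => (hconst s).differentiableAt)
    (fun s => (hconst s).deriv) t t₀
  have hρ₀ : ρ t₀ = 0 := intervalIntegral.integral_same
  simp only [hρ₀, neg_zero, Real.exp_zero, mul_one] at heq
  rw [← heq, mul_assoc, ← Real.exp_add, neg_add_cancel, Real.exp_zero, mul_one]

section PeanoBaker

variable {d : ℕ} {A : ℝ → Matrix (Fin d) (Fin d) ℝ} {t₀ C : ℝ}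

theorem pbIter_succ_self (n : ℕ) : pbIter A t₀ (n + 1) t₀ = 0 :=
  intervalIntegral.integral_same

theorem continuous_pbIter (hA : Continuous A) (n : ℕ) : Continuous (pbIter A t₀ n) := by
  induction n with
  | zero => exact continuous_const
  | succ n ih =>
    exact intervalIntegral.continuous_primitive
      (fun a b => (hA.matrix_mul ih).intervalIntegrable a b) t₀

theorem hasDerivAt_pbIter_succ (hA : Continuous A) (n : ℕ) (t : ℝ) :
    HasDerivAt (pbIter A t₀ (n + 1)) (A t * pbIter A t₀ n t) t :=
  ((hA.matrix_mul (continuous_pbIter hA n)).integral_hasStrictDerivAt t₀ t).hasDerivAt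

theorem norm_mul_le_of_norm_le (hC : ∀ s, ‖A s‖ ≤ C) (s : ℝ) {M : Matrix (Fin d) (Fin d) ℝ}
    {X : ℝ} (hM : ‖M‖ ≤ X) : ‖A s * M‖ ≤ d * C * X :=
  calc ‖A s * M‖ ≤ d * ‖A s‖ * ‖M‖ := by simpa using Matrix.norm_mul_le_card_mul (A s) M
    _ ≤ d * C * X := by
      gcongr
      exacts [mul_nonneg d.cast_nonneg ((norm_nonneg _).trans (hC s)), hC s]

theorem norm_pbIter_le (hC : ∀ s, ‖A s‖ ≤ C) (n : ℕ) (t : ℝ) :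
    ‖pbIter A t₀ n t‖ ≤ (d * C * |t - t₀|) ^ n / n.factorial := by
  induction n generalizing t with
  | zero => simpa [pbIter] using Matrix.norm_one_le_one
  | succ n ih =>
    calc ‖pbIter A t₀ (n + 1) t‖
        ≤ ∫ τ in Ι t₀ t, ‖A τ * pbIter A t₀ n τ‖ :=
          intervalIntegral.norm_integral_le_integral_norm_uIoc
      _ ≤ ∫ τ in Ι t₀ t, d * C * ((d * C * |τ - t₀|) ^ n / n.factorial) :=
          integral_mono_of_nonneg (.of_forall fun _ => norm_nonneg _)
            (Continuous.integrableOn_uIoc (by fun_prop))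
            (.of_forall fun τ => norm_mul_le_of_norm_le hC τ (ih τ))
      _ = ∫ τ in Ι t₀ t, (d * C) ^ (n + 1) / n.factorial * |τ - t₀| ^ n := by
          congr 1 with τ
          ring
      _ = (d * C * |t - t₀|) ^ (n + 1) / (n + 1).factorial := by
          rw [integral_const_mul, integral_pow_abs_sub_uIoc, Nat.factorial_succ]
          push_cast
          field_simp
          ring

theorem summable_pbIter (hC : ∀ s, ‖A s‖ ≤ C) (t : ℝ) : Summable fun n => pbIter A t₀ n t :=
  .of_norm_bounded (Real.summable_pow_div_factorial _) (norm_pbIter_le hC · t)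

theorem tsum_pbIter_self : ∑' n, pbIter A t₀ n t₀ = 1 := by
  rw [tsum_eq_single 0 fun n hn => ?_]
  · rfl
  · obtain ⟨n, rfl⟩ := Nat.exists_eq_succ_of_ne_zero hn
    exact pbIter_succ_self n

theorem hasDerivAt_tsum_pbIter (hA : Continuous A) (hC : ∀ s, ‖A s‖ ≤ C) (t : ℝ) :
    HasDerivAt (fun s => ∑' n, pbIter A t₀ n s) (A t * ∑' n, pbIter A t₀ n t) t := by
  -- The sum is `1 + ∑' n, pbIter A t₀ (n + 1) s`; the tail is differentiated term by term on
  -- `ball t 1`, where the derivatives have a summable bound.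
  set R := |t - t₀| + 1
  have hbound : ∀ n, ∀ s ∈ Metric.ball t 1,
      ‖A s * pbIter A t₀ n s‖ ≤ d * C * ((d * C * R) ^ n / n.factorial) := by
    intro n s hs
    have hK : 0 ≤ (d : ℝ) * C := mul_nonneg d.cast_nonneg ((norm_nonneg _).trans (hC s))
    have hsR : |s - t₀| ≤ R := by
      have := abs_sub_le s t t₀
      rw [Metric.mem_ball, Real.dist_eq] at hs
      linarith
    exact norm_mul_le_of_norm_le hC s ((norm_pbIter_le hC n s).trans (by gcongr))
  have htail := hasDerivAt_tsum_of_isPreconnected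
    ((Real.summable_pow_div_factorial _).mul_left _) Metric.isOpen_ball
    (convex_ball t 1).isPreconnected (fun n s _ => hasDerivAt_pbIter_succ hA n s) hbound
    (Metric.mem_ball_self one_pos) ((summable_nat_add_iff 1).2 (summable_pbIter hC t))
    (Metric.mem_ball_self one_pos)
  refine ((htail.const_add 1).congr_deriv ?_).congr_of_eventuallyEq (.of_forall fun s => ?_)
  · exact (summable_pbIter hC t).tsum_mul_left (A t)
  · exact (summable_pbIter hC s).tsum_eq_zero_add

theorem det_tsum_pbIter (hA : Continuous A) (hC : ∀ s, ‖A s‖ ≤ C) (t : ℝ) :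
    (∑' n, pbIter A t₀ n t).det = Real.exp (∫ τ in t₀..t, (A τ).trace) := by
  have hdet := eq_mul_exp_integral_of_hasDerivAt hA.matrix_trace (fun s =>
    Matrix.hasDerivAt_det_of_hasDerivAt_mul (hasDerivAt_tsum_pbIter (t₀ := t₀) hA hC s)) t₀ t
  rwa [tsum_pbIter_self, Matrix.det_one, one_mul] at hdet

theorem pbIter_eqOn {B : ℝ → Matrix (Fin d) (Fin d) ℝ} {S : Set ℝ} (hS : S.OrdConnected)
    (ht₀ : t₀ ∈ S) (hAB : EqOn A B S) (n : ℕ) : EqOn (pbIter A t₀ n) (pbIter B t₀ n) S := by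
  induction n with
  | zero => exact fun _ _ => rfl
  | succ n ih =>
    intro t ht
    refine intervalIntegral.integral_congr fun τ hτ => ?_
    have hτS := hS.uIcc_subset ht₀ ht hτ
    simp only [hAB hτS, ih hτS]

end PeanoBaker

theorem ContinuousOn.exists_bounded_continuous_eqOn_Icc {E : Type*} [SeminormedAddCommGroup E]
    {f : ℝ → E} {a b : ℝ} (hab : a ≤ b) (hf : ContinuousOn f (Icc a b)) :
    ∃ g : ℝ → E, Continuous g ∧ (∃ C, ∀ x, ‖g x‖ ≤ C) ∧ EqOn g f (Icc a b) := by
  obtain ⟨C, hC⟩ := isCompact_Icc.exists_bound_of_continuousOn hf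
  refine ⟨IccExtend hab ((Icc a b).domRestrict f), hf.domRestrict.Icc_extend', ⟨C, fun x => ?_⟩,
    fun x hx => IccExtend_of_mem hab _ hx⟩
  exact hC _ (projIcc a b hab x).2

theorem stmt11_general {d : ℕ} (A : ℝ → Matrix (Fin d) (Fin d) ℝ)
    (I : Set ℝ) (hI : I.OrdConnected) (t₀ : ℝ) (ht₀ : t₀ ∈ I)
    (hA : ContinuousOn A I) :
    ∀ t ∈ I,
      (∑' n : ℕ, pbIter A t₀ n t).det = Real.exp (∫ τ in t₀..t, (A τ).trace) ∧
      (∑' n : ℕ, pbIter A t₀ n t).det ≠ 0 ∧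
      IsUnit (∑' n : ℕ, pbIter A t₀ n t) := by
  intro t ht
  obtain ⟨B, hB, ⟨C, hC⟩, hBA⟩ :=
    (hA.mono (hI.uIcc_subset ht₀ ht)).exists_bounded_continuous_eqOn_Icc inf_le_sup
  have hΦ : ∑' n, pbIter A t₀ n t = ∑' n, pbIter B t₀ n t := tsum_congr fun n =>
    pbIter_eqOn ordConnected_uIcc left_mem_uIcc hBA.symm n right_mem_uIcc
  have htrace : ∫ τ in t₀..t, (A τ).trace = ∫ τ in t₀..t, (B τ).trace :=
    intervalIntegral.integral_congr fun τ hτ => congrArg Matrix.trace (hBA hτ).symm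
  have hdet : (∑' n, pbIter A t₀ n t).det = Real.exp (∫ τ in t₀..t, (A τ).trace) := by
    rw [hΦ, htrace, det_tsum_pbIter hB hC]
  refine ⟨hdet, hdet ▸ Real.exp_ne_zero _, ?_⟩
  rw [Matrix.isUnit_iff_isUnit_det, hdet]
  exact (Real.exp_pos _).ne'.isUnit

theorem stmt11 {d : ℕ} (hd : 1 ≤ d) (A : ℝ → Matrix (Fin d) (Fin d) ℝ)
    (I : Set ℝ) (hI : I.OrdConnected) (t₀ : ℝ) (ht₀ : t₀ ∈ I)
    (hA : ContinuousOn A I) :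
    ∀ t ∈ I,
      (∑' n : ℕ, pbIter A t₀ n t).det = Real.exp (∫ τ in t₀..t, (A τ).trace) ∧
      (∑' n : ℕ, pbIter A t₀ n t).det ≠ 0 ∧
      IsUnit (∑' n : ℕ, pbIter A t₀ n t) :=
  stmt11_general A I hI t₀ ht₀ hA
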